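/- Let 1 ≤ p < ∞. The similarity operator G is a contraction on L_p[0,1] (i.e., there exists q < 1 with ‖G(f) − G(g)‖_{L_p} ≤ q‖f − g‖_{L_p} for all f, g ∈ L_p[0,1]) if and only if ∑_{k=1}^n a_k|d_k|^p < 1. -/

import Mathlib

/-!
On the `k`-th interval, `G f - G g = d_k · (f - g)((x - α_k)/a_k)`, and `G f - G g` vanishes off
the union of these intervals. The affine change of variables therefore gives
`‖G f - G g‖_p^p = (∑ a_k |d_k|^p) ‖f - g‖_p^p` for all `f, g`, so the best Lipschitz constant of
`G` is `(∑ a_k |d_k|^p)^(1/p)`, attained for instance by `f = 1`, `g = 0`.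
-/

open MeasureTheory Set Filter
open scoped ENNReal NNReal

/-- Breakpoints: `alphaOf a k = α_k = ∑_{i=1}^{k-1} a_i`, so `α_1 = 0`. -/
noncomputable def alphaOf (a : ℕ → ℝ) (k : ℕ) : ℝ := ∑ i ∈ Finset.Ico 1 k, a i

/-- The similarity operator `G`: on `(α_k, α_{k+1})` it takes the value
`β_k + d_k · f((x − α_k)/a_k)`, and `0` outside `⋃ (α_k, α_{k+1})`. -/
noncomputable def simOp (n : ℕ) (a d β : ℕ → ℝ) (f : ℝ → ℝ) : ℝ → ℝ :=
  fun x => ∑ k ∈ Finset.Icc 1 n,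
    Set.indicator (Set.Ioo (alphaOf a k) (alphaOf a (k + 1)))
      (fun y => β k + d k * f ((y - alphaOf a k) / a k)) x

lemma setLIntegral_Ioo_comp_affine (α : ℝ) {c : ℝ} (hc : 0 < c) (F : ℝ → ℝ≥0∞) :
    ∫⁻ x in Ioo α (α + c), F ((x - α) / c) = ENNReal.ofReal c * ∫⁻ y in Ioo 0 1, F y := by
  have himage : (c * · + α) '' Ioo 0 1 = Ioo α (α + c) := by
    rw [image_affine_Ioo hc]; simp [add_comm]
  rw [← himage, lintegral_image_eq_lintegral_abs_deriv_mul measurableSet_Ioo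
    (fun y _ => (((hasDerivAt_id' y).const_mul c).add_const α).hasDerivWithinAt)
    ((add_left_injective α).comp (mul_right_injective₀ hc.ne')).injOn,
    ← lintegral_const_mul' _ _ ENNReal.ofReal_ne_top]
  refine setLIntegral_congr_fun measurableSet_Ioo fun y _ => ?_
  simp [abs_of_pos hc, hc.ne']

section Breakpoints

variable {n : ℕ} {a : ℕ → ℝ}

lemma alphaOf_one (a : ℕ → ℝ) : alphaOf a 1 = 0 := by simp [alphaOf]

lemma alphaOf_succ (a : ℕ → ℝ) {k : ℕ} (hk : 1 ≤ k) : alphaOf a (k + 1) = alphaOf a k + a k :=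
  Finset.sum_Ico_succ_top hk a

lemma alphaOf_add_one_of_sum_eq_one (hsum : ∑ k ∈ Finset.Icc 1 n, a k = 1) :
    alphaOf a (n + 1) = 1 := by
  rwa [alphaOf, Finset.Ico_add_one_right_eq_Icc]

lemma alphaOf_le_alphaOf (ha : ∀ k ∈ Finset.Icc 1 n, 0 < a k) {j k : ℕ} (hj : 1 ≤ j)
    (hjk : j ≤ k) (hk : k ≤ n + 1) : alphaOf a j ≤ alphaOf a k := by
  rw [alphaOf, alphaOf, ← Finset.sum_Ico_consecutive _ hj hjk, le_add_iff_nonneg_right]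
  refine Finset.sum_nonneg fun i hi => (ha i ?_).le
  simp only [Finset.mem_Ico, Finset.mem_Icc] at hi ⊢
  omega

lemma pairwiseDisjoint_Ioo_alphaOf (ha : ∀ k ∈ Finset.Icc 1 n, 0 < a k) :
    (Finset.Icc 1 n : Set ℕ).PairwiseDisjoint
      fun k => Ioo (alphaOf a k) (alphaOf a (k + 1)) := by
  have key : ∀ j k, 1 ≤ j → j < k → k ≤ n →
      Disjoint (Ioo (alphaOf a j) (alphaOf a (j + 1))) (Ioo (alphaOf a k) (alphaOf a (k + 1))) :=
    fun j k hj hjk hk =>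
      (Ioc_disjoint_Ioc_of_le (alphaOf_le_alphaOf ha (by omega) hjk (by omega))).mono
        Ioo_subset_Ioc_self Ioo_subset_Ioc_self
  intro j hj k hk hjk
  simp only [Finset.coe_Icc, mem_Icc] at hj hk
  rcases hjk.lt_or_gt with h | h
  · exact key j k hj.1 h hk.2
  · exact (key k j hk.1 h hj.2).symm

lemma Ioo_alphaOf_subset_Icc (ha : ∀ k ∈ Finset.Icc 1 n, 0 < a k)
    (hsum : ∑ k ∈ Finset.Icc 1 n, a k = 1) {k : ℕ} (hk : k ∈ Finset.Icc 1 n) :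
    Ioo (alphaOf a k) (alphaOf a (k + 1)) ⊆ Icc 0 1 := by
  rw [Finset.mem_Icc] at hk
  have h0 := alphaOf_le_alphaOf ha le_rfl hk.1 (by omega)
  have h1 := alphaOf_le_alphaOf ha (by omega) (by omega : k + 1 ≤ n + 1) le_rfl
  rw [alphaOf_one] at h0
  rw [alphaOf_add_one_of_sum_eq_one hsum] at h1
  exact Ioo_subset_Icc_self.trans (Icc_subset_Icc h0 h1)

end Breakpoints

section SimOp

variable {n : ℕ} {a : ℕ → ℝ} (d β : ℕ → ℝ)

lemma simOp_sub (f g : ℝ → ℝ) : simOp n a d β f - simOp n a d β g = simOp n a d 0 (f - g) := by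
  ext x
  simp only [simOp, Pi.sub_apply, ← Finset.sum_sub_distrib, Pi.zero_apply]
  refine Finset.sum_congr rfl fun k _ => (congrFun (indicator_sub _ _ _) x).symm.trans ?_
  congr 1 with y
  ring

lemma simOp_apply_of_mem (ha : ∀ k ∈ Finset.Icc 1 n, 0 < a k) (f : ℝ → ℝ) {k : ℕ}
    (hk : k ∈ Finset.Icc 1 n) {x : ℝ} (hx : x ∈ Ioo (alphaOf a k) (alphaOf a (k + 1))) :
    simOp n a d β f x = β k + d k * f ((x - alphaOf a k) / a k) := by
  rw [simOp, Finset.sum_eq_single_of_mem k hk, indicator_of_mem hx]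
  exact fun j hj hjk =>
    indicator_of_notMem (disjoint_left.1 (pairwiseDisjoint_Ioo_alphaOf ha hj hk hjk) · hx) _

lemma simOp_apply_of_notMem (f : ℝ → ℝ) {x : ℝ}
    (hx : x ∉ ⋃ k ∈ Finset.Icc 1 n, Ioo (alphaOf a k) (alphaOf a (k + 1))) :
    simOp n a d β f x = 0 :=
  Finset.sum_eq_zero fun _ hk => indicator_of_notMem (fun h => hx (mem_biUnion hk h)) _

end SimOp

section Integrals

variable {n : ℕ} {a : ℕ → ℝ} (d : ℕ → ℝ) {r : ℝ}

lemma setLIntegral_Ioo_alphaOf_rpow_enorm_simOp (ha : ∀ k ∈ Finset.Icc 1 n, 0 < a k)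
    (hr : 0 < r) (h : ℝ → ℝ) {k : ℕ} (hk : k ∈ Finset.Icc 1 n) :
    ∫⁻ x in Ioo (alphaOf a k) (alphaOf a (k + 1)), ‖simOp n a d 0 h x‖ₑ ^ r =
      ENNReal.ofReal (a k * |d k| ^ r) * ∫⁻ x in Icc 0 1, ‖h x‖ₑ ^ r := by
  have hak := ha k hk
  have hIk := alphaOf_succ a (Finset.mem_Icc.1 hk).1
  calc ∫⁻ x in Ioo (alphaOf a k) (alphaOf a (k + 1)), ‖simOp n a d 0 h x‖ₑ ^ r
      = ∫⁻ x in Ioo (alphaOf a k) (alphaOf a k + a k),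
          ‖d k‖ₑ ^ r * ‖h ((x - alphaOf a k) / a k)‖ₑ ^ r := by
        rw [hIk]
        refine setLIntegral_congr_fun measurableSet_Ioo fun x hx => ?_
        rw [simOp_apply_of_mem d 0 ha h hk (by rwa [hIk]), Pi.zero_apply, zero_add, enorm_mul,
          ENNReal.mul_rpow_of_nonneg _ _ hr.le]
    _ = ‖d k‖ₑ ^ r * (ENNReal.ofReal (a k) * ∫⁻ y in Ioo 0 1, ‖h y‖ₑ ^ r) := by
        rw [lintegral_const_mul' _ _ (by simp [hr.le]),
          setLIntegral_Ioo_comp_affine _ hak fun y => ‖h y‖ₑ ^ r]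
    _ = _ := by
        rw [setLIntegral_congr Ioo_ae_eq_Icc, ENNReal.ofReal_mul hak.le,
          ← ENNReal.ofReal_rpow_of_nonneg (abs_nonneg _) hr.le, ← Real.enorm_eq_ofReal_abs]
        ring

lemma setLIntegral_Icc_rpow_enorm_simOp (ha : ∀ k ∈ Finset.Icc 1 n, 0 < a k)
    (hsum : ∑ k ∈ Finset.Icc 1 n, a k = 1) (hr : 0 < r) (h : ℝ → ℝ) :
    ∫⁻ x in Icc 0 1, ‖simOp n a d 0 h x‖ₑ ^ r =
      ENNReal.ofReal (∑ k ∈ Finset.Icc 1 n, a k * |d k| ^ r) * ∫⁻ x in Icc 0 1, ‖h x‖ₑ ^ r := by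
  set S := ⋃ k ∈ Finset.Icc 1 n, Ioo (alphaOf a k) (alphaOf a (k + 1))
  have hsupp : (fun x => ‖simOp n a d 0 h x‖ₑ ^ r).support ⊆ S := by
    intro x hx
    by_contra hxS
    exact hx (by simp [simOp_apply_of_notMem d 0 h hxS, hr])
  have hS : S ⊆ Icc 0 1 := iUnion₂_subset fun k hk => Ioo_alphaOf_subset_Icc ha hsum hk
  calc ∫⁻ x in Icc 0 1, ‖simOp n a d 0 h x‖ₑ ^ r
      = ∫⁻ x in S, ‖simOp n a d 0 h x‖ₑ ^ r := by
        rw [setLIntegral_eq_of_support_subset (hsupp.trans hS),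
          setLIntegral_eq_of_support_subset hsupp]
    _ = ∑ k ∈ Finset.Icc 1 n,
          ∫⁻ x in Ioo (alphaOf a k) (alphaOf a (k + 1)), ‖simOp n a d 0 h x‖ₑ ^ r :=
        lintegral_biUnion_finset (pairwiseDisjoint_Ioo_alphaOf ha) (fun _ _ => measurableSet_Ioo) _
    _ = _ := by
        rw [Finset.sum_congr rfl fun k hk =>
            setLIntegral_Ioo_alphaOf_rpow_enorm_simOp d ha hr h hk,
          ← Finset.sum_mul, ENNReal.ofReal_sum_of_nonneg
            fun k hk => mul_nonneg (ha k hk).le (by positivity)]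

end Integrals

lemma eLpNorm_simOp {n : ℕ} {a : ℕ → ℝ}
    (ha : ∀ k ∈ Finset.Icc 1 n, 0 < a k) (hsum : ∑ k ∈ Finset.Icc 1 n, a k = 1)
    (d : ℕ → ℝ) {p : ℝ≥0∞} (hp0 : p ≠ 0) (hpt : p ≠ ⊤) (h : ℝ → ℝ) :
    eLpNorm (simOp n a d 0 h) p (volume.restrict (Icc 0 1)) =
      ENNReal.ofReal (∑ k ∈ Finset.Icc 1 n, a k * |d k| ^ p.toReal) ^ (1 / p.toReal) *
        eLpNorm h p (volume.restrict (Icc 0 1)) := by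
  rw [eLpNorm_eq_lintegral_rpow_enorm_toReal hp0 hpt,
    eLpNorm_eq_lintegral_rpow_enorm_toReal hp0 hpt,
    setLIntegral_Icc_rpow_enorm_simOp d ha hsum (ENNReal.toReal_pos hp0 hpt),
    ENNReal.mul_rpow_of_nonneg _ _ (by positivity)]

lemma exists_lt_one_forall_mul_eLpNorm_sub_le_iff {α E : Type*} [MeasurableSpace α]
    [NormedAddCommGroup E] [Nontrivial E] {μ : Measure α} [IsFiniteMeasure μ] (hμ : μ ≠ 0)
    {p : ℝ≥0∞} (hp0 : p ≠ 0) (c : ℝ≥0∞) :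
    (∃ q : ℝ≥0, q < 1 ∧ ∀ f g : α → E, MemLp f p μ → MemLp g p μ →
        c * eLpNorm (f - g) p μ ≤ q * eLpNorm (f - g) p μ) ↔ c < 1 := by
  constructor
  · rintro ⟨q, hq, hle⟩
    obtain ⟨v, hv⟩ := exists_ne (0 : E)
    have hpos : eLpNorm (fun _ => v) p μ ≠ 0 := by simp [eLpNorm_const v hp0 hμ, hv, hμ]
    have hfin : eLpNorm (fun _ => v) p μ ≠ ⊤ := (memLp_const v).eLpNorm_lt_top.ne
    have hv_le := hle (fun _ => v) 0 (memLp_const v) MemLp.zero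
    rw [sub_zero] at hv_le
    exact ((ENNReal.mul_le_mul_iff_left hpos hfin).1 hv_le).trans_lt (by exact_mod_cast hq)
  · intro hc
    obtain ⟨q, hcq, hq⟩ := ENNReal.lt_iff_exists_nnreal_btwn.1 hc
    exact ⟨q, by exact_mod_cast hq, fun f g _ _ => mul_le_mul_left hcq.le _⟩

theorem simOp_contraction_iff_general (n : ℕ) (a d β : ℕ → ℝ)
    (ha : ∀ k ∈ Finset.Icc 1 n, 0 < a k)
    (hsum : ∑ k ∈ Finset.Icc 1 n, a k = 1)
    (p : ℝ≥0∞) (hp1 : 1 ≤ p) (hpt : p ≠ ⊤) :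
    (∃ q : ℝ≥0, q < 1 ∧ ∀ f g : ℝ → ℝ,
        MemLp f p (volume.restrict (Set.Icc (0:ℝ) 1)) →
        MemLp g p (volume.restrict (Set.Icc (0:ℝ) 1)) →
        eLpNorm (simOp n a d β f - simOp n a d β g) p (volume.restrict (Set.Icc (0:ℝ) 1)) ≤
          (q : ℝ≥0∞) * eLpNorm (f - g) p (volume.restrict (Set.Icc (0:ℝ) 1))) ↔
      ∑ k ∈ Finset.Icc 1 n, a k * |d k| ^ p.toReal < 1 := by
  have hp0 : p ≠ 0 := (zero_lt_one.trans_le hp1).ne'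
  have hμ : volume.restrict (Icc (0 : ℝ) 1) ≠ 0 := by simp
  simp only [simOp_sub, eLpNorm_simOp ha hsum d hp0 hpt]
  rw [exists_lt_one_forall_mul_eLpNorm_sub_le_iff hμ hp0, one_div,
    ENNReal.rpow_inv_lt_iff (ENNReal.toReal_pos hp0 hpt), ENNReal.one_rpow, ENNReal.ofReal_lt_one]

/-- for `1 ≤ p < ∞`, the similarity operator `G` is a contraction on
`L_p[0,1]` iff `∑_{k=1}^n a_k |d_k|^p < 1`. -/
theorem simOp_contraction_iff (n : ℕ) (hn : 1 < n) (a d β : ℕ → ℝ)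
    (ha : ∀ k ∈ Finset.Icc 1 n, 0 < a k)
    (hsum : ∑ k ∈ Finset.Icc 1 n, a k = 1)
    (p : ℝ≥0∞) (hp1 : 1 ≤ p) (hpt : p ≠ ⊤) :
    (∃ q : ℝ≥0, q < 1 ∧ ∀ f g : ℝ → ℝ,
        MemLp f p (volume.restrict (Set.Icc (0:ℝ) 1)) →
        MemLp g p (volume.restrict (Set.Icc (0:ℝ) 1)) →
        eLpNorm (simOp n a d β f - simOp n a d β g) p (volume.restrict (Set.Icc (0:ℝ) 1)) ≤
          (q : ℝ≥0∞) * eLpNorm (f - g) p (volume.restrict (Set.Icc (0:ℝ) 1))) ↔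
      ∑ k ∈ Finset.Icc 1 n, a k * |d k| ^ p.toReal < 1 :=
  simOp_contraction_iff_general n a d β ha hsum p hp1 hpt
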